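/- arXiv:0910.3769 — 2 statements merged into one kernel-verified Lean document; each statement's English description precedes it below -/
import Mathlib

section
/- Let (Ω, F, P) be a probability space with a filtration (F_n)_{n ∈ ℕ}, let d ≥ 1, L > 0, T > 0, C₀ > 0, let δ ∈ (0, 1] and N ∈ ℕ with N·δ ≤ T. Let ξ₀ be an F₀-measurable ℝ^d-valued random variable with E‖ξ₀‖² ≤ C₀, and for 1 ≤ k ≤ N let α_k be F_k-measurable, square-integrable ℝ^d-valued random variables; set ξ_n := ξ₀ + Σ_{k=1}^n α_k. Assume that almost surely, for every 1 ≤ k ≤ N: ‖E[α_k | F_{k−1}]‖ ≤ δ L (1 + ‖ξ_{k−1}‖) and E[‖α_k‖² | F_{k−1}] ≤ δ L (1 + ‖ξ_{k−1}‖²). Then there exists a constant k, depending only on L, T and C₀ (and not on δ or N), such that E‖ξ_n − ξ_m‖² ≤ k · δ · (n − m) for all 0 ≤ m ≤ n ≤ N. -/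
/-!
Writing `ξ (p + 1) = ξ p + α (p + 1)`, the pull-out property of the conditional expectation turns
the cross term `E⟪X, α (p + 1)⟫` into `E⟪X, E[α (p + 1) | F p]⟫` for every `F p`-measurable `X`,
so the drift and second-moment hypotheses give a linear recursion for `E‖X + α (p + 1)‖²` with
coefficients of order `δ L`. With `X = ξ p` the discrete Grönwall inequality bounds `E‖ξ p‖²`
uniformly for `p ≤ N`, since `δ p ≤ T`; with `X = ξ p - ξ m` it then gives
`E‖ξ n - ξ m‖² ≤ 3 (1 + sup E‖ξ‖²) e^{LT} · δ L (n - m)`.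
-/

open MeasureTheory Filter Finset

open scoped RealInnerProductSpace

theorem discrete_gronwall_of_lt {u : ℕ → ℝ} {a b : ℝ} {n : ℕ} (hu0 : 0 ≤ u 0) (ha : 0 ≤ a)
    (hb : 0 ≤ b) (hu : ∀ p < n, u (p + 1) ≤ (1 + a) * u p + b) :
    u n ≤ (u 0 + b * n) * Real.exp (a * n) := by
  -- freeze the sequence after time `n`, where the recursion holds with zero coefficients
  have key := discrete_gronwall (u := fun p ↦ u (min p n)) (c := fun p ↦ if p < n then a else 0)
    (b := fun p ↦ if p < n then b else 0) (n₀ := 0) (by simpa using hu0) (fun p _ ↦ ?_)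
    (fun p _ ↦ by split_ifs <;> simp [ha]) (fun p _ ↦ by split_ifs <;> simp [hb]) (Nat.zero_le n)
  · rw [sum_ite_of_true fun p hp ↦ (mem_Ico.mp hp).2,
      sum_ite_of_true fun p hp ↦ (mem_Ico.mp hp).2] at key
    simpa [mul_comm] using key
  · by_cases hp : p < n
    · simpa [hp, Nat.min_eq_left hp.le, Nat.min_eq_left hp] using hu p hp
    · simp [hp, Nat.min_eq_right (not_lt.mp hp), Nat.min_eq_right (by omega : n ≤ p + 1)]

section OneStep

variable {Ω E : Type*} [NormedAddCommGroup E] [InnerProductSpace ℝ E]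
  {m m0 : MeasurableSpace Ω} {P : Measure Ω}

lemma MeasureTheory.MemLp.integrable_inner {X Y : Ω → E} (hX : MemLp X 2 P)
    (hY : MemLp Y 2 P) : Integrable (fun ω ↦ ⟪X ω, Y ω⟫) P :=
  memLp_one_iff_integrable.1 ((innerSL ℝ).memLp_of_bilin 1 hX hY)

lemma integral_norm_add_sq {X A : Ω → E} (hX : MemLp X 2 P) (hA : MemLp A 2 P) :
    ∫ ω, ‖X ω + A ω‖ ^ 2 ∂P =
      ∫ ω, ‖X ω‖ ^ 2 ∂P + 2 * ∫ ω, ⟪X ω, A ω⟫ ∂P + ∫ ω, ‖A ω‖ ^ 2 ∂P := by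
  have hX2 := hX.norm.integrable_sq
  have hXA := (hX.integrable_inner hA).const_mul 2
  simp_rw [norm_add_sq_real]
  rw [integral_add (hX2.fun_add hXA) hA.norm.integrable_sq, integral_add hX2 hXA,
    integral_const_mul]

lemma integral_le_of_condExp_le [IsFiniteMeasure P] (hm : m ≤ m0) {f g : Ω → ℝ}
    (hg : Integrable g P) (h : P[f|m] ≤ᵐ[P] g) : ∫ ω, f ω ∂P ≤ ∫ ω, g ω ∂P :=
  (integral_condExp hm).symm.trans_le (integral_mono_ae integrable_condExp hg h)

variable [CompleteSpace E]

lemma integral_inner_condExp [IsFiniteMeasure P] (hm : m ≤ m0) {X A : Ω → E}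
    (hX : StronglyMeasurable[m] X) (hXA : Integrable (fun ω ↦ ⟪X ω, A ω⟫) P)
    (hA : Integrable A P) :
    ∫ ω, ⟪X ω, (P[A|m]) ω⟫ ∂P = ∫ ω, ⟪X ω, A ω⟫ ∂P :=
  (integral_congr_ae (condExp_bilin_of_stronglyMeasurable_left (innerSL ℝ) hX hXA hA)).symm.trans
    (integral_condExp hm)

variable [IsProbabilityMeasure P]

lemma integral_inner_le_of_norm_condExp_le (hm : m ≤ m0) {X A W : Ω → E} {c : ℝ} (hc : 0 ≤ c)
    (hXm : StronglyMeasurable[m] X) (hX : MemLp X 2 P) (hA : MemLp A 2 P) (hW : MemLp W 2 P)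
    (hdrift : ∀ᵐ ω ∂P, ‖(P[A|m]) ω‖ ≤ c * (1 + ‖W ω‖)) :
    ∫ ω, ⟪X ω, A ω⟫ ∂P ≤ c * ((∫ ω, ‖X ω‖ ^ 2 ∂P) / 2 + 1 + ∫ ω, ‖W ω‖ ^ 2 ∂P) := by
  have hX2 := (hX.norm.integrable_sq.div_const 2).fun_add (integrable_const 1)
  have hW2 := hW.norm.integrable_sq
  rw [← integral_inner_condExp hm hXm (hX.integrable_inner hA) (hA.integrable one_le_two)]
  calc ∫ ω, ⟪X ω, (P[A|m]) ω⟫ ∂P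
      ≤ ∫ ω, c * (‖X ω‖ ^ 2 / 2 + 1 + ‖W ω‖ ^ 2) ∂P := by
        refine integral_mono_ae (hX.integrable_inner (hA.condExp one_le_two))
          ((hX2.fun_add hW2).const_mul c) ?_
        filter_upwards [hdrift] with ω hω
        calc ⟪X ω, (P[A|m]) ω⟫ ≤ ‖X ω‖ * ‖(P[A|m]) ω‖ := real_inner_le_norm _ _
          _ ≤ ‖X ω‖ * (c * (1 + ‖W ω‖)) := by gcongr
          _ ≤ c * (‖X ω‖ ^ 2 / 2 + 1 + ‖W ω‖ ^ 2) := by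
            nlinarith [mul_nonneg hc (sq_nonneg (‖X ω‖ - 1 - ‖W ω‖)),
              mul_nonneg hc (sq_nonneg (‖W ω‖ - 1))]
    _ = c * ((∫ ω, ‖X ω‖ ^ 2 ∂P) / 2 + 1 + ∫ ω, ‖W ω‖ ^ 2 ∂P) := by
        rw [integral_const_mul, integral_add hX2 hW2,
          integral_add (hX.norm.integrable_sq.div_const 2) (integrable_const 1), integral_div]
        simp

theorem integral_norm_add_sq_le (hm : m ≤ m0) {X A W : Ω → E} {c : ℝ} (hc : 0 ≤ c)
    (hXm : StronglyMeasurable[m] X) (hX : MemLp X 2 P) (hA : MemLp A 2 P) (hW : MemLp W 2 P)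
    (hdrift : ∀ᵐ ω ∂P, ‖(P[A|m]) ω‖ ≤ c * (1 + ‖W ω‖))
    (hsq : ∀ᵐ ω ∂P, (P[fun ω ↦ ‖A ω‖ ^ 2|m]) ω ≤ c * (1 + ‖W ω‖ ^ 2)) :
    ∫ ω, ‖X ω + A ω‖ ^ 2 ∂P ≤
      (1 + c) * ∫ ω, ‖X ω‖ ^ 2 ∂P + 3 * c * (1 + ∫ ω, ‖W ω‖ ^ 2 ∂P) := by
  have hW2 := hW.norm.integrable_sq
  have hcross := integral_inner_le_of_norm_condExp_le hm hc hXm hX hA hW hdrift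
  have hsecond : ∫ ω, ‖A ω‖ ^ 2 ∂P ≤ c * (1 + ∫ ω, ‖W ω‖ ^ 2 ∂P) := by
    refine (integral_le_of_condExp_le hm (((integrable_const 1).fun_add hW2).const_mul c)
      hsq).trans_eq ?_
    rw [integral_const_mul, integral_add (integrable_const 1) hW2]
    simp
  rw [integral_norm_add_sq hX hA]
  nlinarith

end OneStep

section ControlledIncrements

variable {Ω E : Type*} [NormedAddCommGroup E] [InnerProductSpace ℝ E]
  {m0 : MeasurableSpace Ω} {P : Measure Ω} {F : Filtration ℕ m0} {ξ α : ℕ → Ω → E} {N : ℕ}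
  {c : ℝ}

structure HasControlledIncrements (P : Measure Ω) (F : Filtration ℕ m0) (ξ α : ℕ → Ω → E)
    (N : ℕ) (c : ℝ) : Prop where
  stronglyMeasurable_zero : StronglyMeasurable[F 0] (ξ 0)
  memLp_zero : MemLp (ξ 0) 2 P
  stronglyMeasurable_increment : ∀ p < N, StronglyMeasurable[F (p + 1)] (α (p + 1))
  memLp_increment : ∀ p < N, MemLp (α (p + 1)) 2 P
  succ_eq : ∀ p < N, ξ (p + 1) = ξ p + α (p + 1)
  norm_condExp_le : ∀ p < N, ∀ᵐ ω ∂P, ‖(P[α (p + 1)|F p]) ω‖ ≤ c * (1 + ‖ξ p ω‖)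
  condExp_sq_norm_le :
    ∀ p < N, ∀ᵐ ω ∂P, (P[fun ω ↦ ‖α (p + 1) ω‖ ^ 2|F p]) ω ≤ c * (1 + ‖ξ p ω‖ ^ 2)

theorem hasControlledIncrements_of_eq_add_sum {ξ₀ : Ω → E}
    (hξ₀m : StronglyMeasurable[F 0] ξ₀) (hξ₀ : MemLp ξ₀ 2 P)
    (hαm : ∀ j, 1 ≤ j → j ≤ N → StronglyMeasurable[F j] (α j))
    (hα : ∀ j, 1 ≤ j → j ≤ N → MemLp (α j) 2 P)
    (hξ : ∀ n ω, ξ n ω = ξ₀ ω + ∑ j ∈ Icc 1 n, α j ω)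
    (hdrift : ∀ᵐ ω ∂P, ∀ j, 1 ≤ j → j ≤ N →
      ‖(P[α j | F (j - 1)]) ω‖ ≤ c * (1 + ‖ξ (j - 1) ω‖))
    (hsq : ∀ᵐ ω ∂P, ∀ j, 1 ≤ j → j ≤ N →
      (P[fun ω' ↦ ‖α j ω'‖ ^ 2 | F (j - 1)]) ω ≤ c * (1 + ‖ξ (j - 1) ω‖ ^ 2)) :
    HasControlledIncrements P F ξ α N c := by
  have hξ0 : ξ 0 = ξ₀ := funext fun ω ↦ by simp [hξ]
  refine ⟨hξ0 ▸ hξ₀m, hξ0 ▸ hξ₀, fun p hp ↦ hαm _ p.succ_pos hp, fun p hp ↦ hα _ p.succ_pos hp,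
    fun p _ ↦ funext fun ω ↦ ?_, fun p hp ↦ ?_, fun p hp ↦ ?_⟩
  · rw [Pi.add_apply, hξ, hξ, sum_Icc_succ_top (by omega), add_assoc]
  · filter_upwards [hdrift] with ω hω using by simpa using hω _ p.succ_pos hp
  · filter_upwards [hsq] with ω hω using by simpa using hω _ p.succ_pos hp

namespace HasControlledIncrements

theorem stronglyMeasurable (h : HasControlledIncrements P F ξ α N c) {p : ℕ} (hp : p ≤ N) :
    StronglyMeasurable[F p] (ξ p) := by
  induction p with
  | zero => exact h.stronglyMeasurable_zero
  | succ p ih =>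
    rw [h.succ_eq p hp]
    exact ((ih (by omega)).mono (F.mono p.le_succ)).add (h.stronglyMeasurable_increment p hp)

theorem memLp (h : HasControlledIncrements P F ξ α N c) {p : ℕ} (hp : p ≤ N) :
    MemLp (ξ p) 2 P := by
  induction p with
  | zero => exact h.memLp_zero
  | succ p ih =>
    rw [h.succ_eq p hp]
    exact (ih (by omega)).add (h.memLp_increment p hp)

variable [CompleteSpace E] [IsProbabilityMeasure P]

theorem integral_sq_norm_succ_le (h : HasControlledIncrements P F ξ α N c) (hc : 0 ≤ c)
    {p : ℕ} (hp : p < N) :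
    ∫ ω, ‖ξ (p + 1) ω‖ ^ 2 ∂P ≤ (1 + 4 * c) * ∫ ω, ‖ξ p ω‖ ^ 2 ∂P + 3 * c := by
  have hstep := integral_norm_add_sq_le (F.le p) hc (h.stronglyMeasurable hp.le) (h.memLp hp.le)
    (h.memLp_increment p hp) (h.memLp hp.le) (h.norm_condExp_le p hp) (h.condExp_sq_norm_le p hp)
  simp only [h.succ_eq p hp, Pi.add_apply]
  linarith

theorem integral_sq_norm_sub_succ_le (h : HasControlledIncrements P F ξ α N c) (hc : 0 ≤ c)
    {m p : ℕ} (hmp : m ≤ p) (hp : p < N) :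
    ∫ ω, ‖ξ (p + 1) ω - ξ m ω‖ ^ 2 ∂P ≤
      (1 + c) * ∫ ω, ‖ξ p ω - ξ m ω‖ ^ 2 ∂P + 3 * c * (1 + ∫ ω, ‖ξ p ω‖ ^ 2 ∂P) := by
  have hstep := integral_norm_add_sq_le (F.le p) hc
    ((h.stronglyMeasurable hp.le).sub ((h.stronglyMeasurable (hmp.trans hp.le)).mono (F.mono hmp)))
    ((h.memLp hp.le).sub (h.memLp (hmp.trans hp.le))) (h.memLp_increment p hp) (h.memLp hp.le)
    (h.norm_condExp_le p hp) (h.condExp_sq_norm_le p hp)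
  have hξ : ξ (p + 1) - ξ m = (ξ p - ξ m) + α (p + 1) := by
    rw [h.succ_eq p hp]; abel
  simp only [← Pi.sub_apply, hξ]
  simpa only [Pi.sub_apply, Pi.add_apply] using hstep

theorem integral_sq_norm_le (h : HasControlledIncrements P F ξ α N c) (hc : 0 ≤ c) {K : ℝ}
    (hK : c * N ≤ K) {p : ℕ} (hp : p ≤ N) :
    ∫ ω, ‖ξ p ω‖ ^ 2 ∂P ≤ (∫ ω, ‖ξ 0 ω‖ ^ 2 ∂P + 3 * K) * Real.exp (4 * K) := by
  have hξ0 : 0 ≤ ∫ ω, ‖ξ 0 ω‖ ^ 2 ∂P := integral_nonneg fun _ ↦ sq_nonneg _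
  have hcp : c * p ≤ K := (mul_le_mul_of_nonneg_left (Nat.cast_le.2 hp) hc).trans hK
  calc ∫ ω, ‖ξ p ω‖ ^ 2 ∂P ≤ (∫ ω, ‖ξ 0 ω‖ ^ 2 ∂P + 3 * c * p) * Real.exp (4 * c * p) :=
        discrete_gronwall_of_lt (u := fun q ↦ ∫ ω, ‖ξ q ω‖ ^ 2 ∂P) hξ0 (by positivity)
          (by positivity) fun q hq ↦ h.integral_sq_norm_succ_le hc (hq.trans_le hp)
    _ ≤ (∫ ω, ‖ξ 0 ω‖ ^ 2 ∂P + 3 * K) * Real.exp (4 * K) :=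
        mul_le_mul (by linarith) (Real.exp_le_exp.2 (by linarith)) (Real.exp_pos _).le
          (by nlinarith [mul_nonneg hc (Nat.cast_nonneg (α := ℝ) p)])

theorem integral_sq_norm_sub_le (h : HasControlledIncrements P F ξ α N c) (hc : 0 ≤ c)
    {K : ℝ} (hK : c * N ≤ K) {V : ℝ} (hV : ∀ p ≤ N, ∫ ω, ‖ξ p ω‖ ^ 2 ∂P ≤ V) {m n : ℕ}
    (hmn : m ≤ n) (hn : n ≤ N) :
    ∫ ω, ‖ξ n ω - ξ m ω‖ ^ 2 ∂P ≤ 3 * (1 + V) * Real.exp K * (c * (n - m)) := by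
  have hV0 : 0 ≤ V := (integral_nonneg fun _ ↦ sq_nonneg _).trans (hV 0 (Nat.zero_le N))
  have hrec (q : ℕ) (hq : q < n - m) : ∫ ω, ‖ξ (m + q + 1) ω - ξ m ω‖ ^ 2 ∂P ≤
      (1 + c) * ∫ ω, ‖ξ (m + q) ω - ξ m ω‖ ^ 2 ∂P + 3 * c * (1 + V) := by
    have hq : m + q < N := by omega
    nlinarith [h.integral_sq_norm_sub_succ_le hc (m.le_add_right q) hq, hV (m + q) hq.le]
  have hgron := discrete_gronwall_of_lt (u := fun q ↦ ∫ ω, ‖ξ (m + q) ω - ξ m ω‖ ^ 2 ∂P)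
    (by simp) hc (by positivity) hrec
  simp only [add_zero, sub_self, norm_zero, zero_pow two_ne_zero, integral_zero, zero_add,
    Nat.add_sub_cancel' hmn, Nat.cast_sub hmn] at hgron
  have hnm0 : 0 ≤ (n : ℝ) - m := sub_nonneg.2 (Nat.cast_le.2 hmn)
  have hnN : (n : ℝ) - m ≤ N := (sub_le_self _ m.cast_nonneg).trans (Nat.cast_le.2 hn)
  have hnm : c * (n - m) ≤ K := (mul_le_mul_of_nonneg_left hnN hc).trans hK
  calc ∫ ω, ‖ξ n ω - ξ m ω‖ ^ 2 ∂P ≤ 3 * c * (1 + V) * (n - m) * Real.exp (c * (n - m)) := hgron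
    _ ≤ 3 * c * (1 + V) * (n - m) * Real.exp K := by gcongr
    _ = 3 * (1 + V) * Real.exp K * (c * (n - m)) := by ring

end HasControlledIncrements

end ControlledIncrements

section SquareIntegrable

variable {Ω E : Type*} [NormedAddCommGroup E] {m0 : MeasurableSpace Ω} {P : Measure Ω}
  {f : Ω → E} {C : ℝ}

lemma memLp_two_of_lintegral_sq_norm_le (hf : AEStronglyMeasurable f P)
    (h : ∫⁻ ω, ENNReal.ofReal (‖f ω‖ ^ 2) ∂P ≤ ENNReal.ofReal C) : MemLp f 2 P :=
  (memLp_two_iff_integrable_sq_norm hf).2 ⟨hf.norm.pow 2,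
    (hasFiniteIntegral_iff_ofReal (ae_of_all _ fun _ ↦ sq_nonneg _)).2
      (h.trans_lt ENNReal.ofReal_lt_top)⟩

lemma integral_sq_norm_le_of_lintegral_le (hf : AEStronglyMeasurable f P) (hC : 0 ≤ C)
    (h : ∫⁻ ω, ENNReal.ofReal (‖f ω‖ ^ 2) ∂P ≤ ENNReal.ofReal C) : ∫ ω, ‖f ω‖ ^ 2 ∂P ≤ C := by
  rw [integral_eq_lintegral_of_nonneg_ae (ae_of_all _ fun _ ↦ sq_nonneg _) (hf.norm.pow 2)]
  exact ENNReal.toReal_le_of_le_ofReal hC h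

end SquareIntegrable

theorem increment_second_moment_bound_general
    (d : ℕ) (L T C₀ : ℝ) (hL : 0 < L) (hT : 0 < T) (hC₀ : 0 < C₀) :
    ∃ k : ℝ, 0 < k ∧
      ∀ (Ω : Type) [m0 : MeasurableSpace Ω] (P : Measure Ω), IsProbabilityMeasure P →
      ∀ (F : Filtration ℕ m0) (δ : ℝ) (N : ℕ)
        (ξ₀ : Ω → EuclideanSpace ℝ (Fin d))
        (α : ℕ → Ω → EuclideanSpace ℝ (Fin d))
        (ξ : ℕ → Ω → EuclideanSpace ℝ (Fin d)),
        0 < δ → δ ≤ 1 → (N : ℝ) * δ ≤ T →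
        StronglyMeasurable[F 0] ξ₀ →
        (∫⁻ ω, ENNReal.ofReal (‖ξ₀ ω‖ ^ 2) ∂P) ≤ ENNReal.ofReal C₀ →
        (∀ j, 1 ≤ j → j ≤ N → StronglyMeasurable[F j] (α j)) →
        (∀ j, 1 ≤ j → j ≤ N → MemLp (α j) 2 P) →
        (∀ n ω, ξ n ω = ξ₀ ω + ∑ j ∈ Finset.Icc 1 n, α j ω) →
        (∀ᵐ ω ∂P, ∀ j, 1 ≤ j → j ≤ N →
          ‖(P[α j | F (j - 1)]) ω‖ ≤ δ * L * (1 + ‖ξ (j - 1) ω‖)) →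
        (∀ᵐ ω ∂P, ∀ j, 1 ≤ j → j ≤ N →
          (P[fun ω' => ‖α j ω'‖ ^ 2 | F (j - 1)]) ω ≤ δ * L * (1 + ‖ξ (j - 1) ω‖ ^ 2)) →
        ∀ m n : ℕ, m ≤ n → n ≤ N →
          (∫⁻ ω, ENNReal.ofReal (‖ξ n ω - ξ m ω‖ ^ 2) ∂P)
            ≤ ENNReal.ofReal (k * δ * ((n : ℝ) - (m : ℝ))) := by
  set V := (C₀ + 3 * (L * T)) * Real.exp (4 * (L * T))
  refine ⟨3 * (1 + V) * Real.exp (L * T) * L, by positivity, ?_⟩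
  intro Ω m0 P _ F δ N ξ₀ α ξ hδ _ hNδ hξ₀m hξ₀ hαm hα hξ hdrift hsq m n hmn hnN
  have hξ₀meas : AEStronglyMeasurable ξ₀ P := (hξ₀m.mono (F.le 0)).aestronglyMeasurable
  have h := hasControlledIncrements_of_eq_add_sum hξ₀m
    (memLp_two_of_lintegral_sq_norm_le hξ₀meas hξ₀) hαm hα hξ hdrift hsq
  have hc : 0 ≤ δ * L := by positivity
  have hK : δ * L * N ≤ L * T := by nlinarith
  have hξ0 : ξ 0 = ξ₀ := funext fun ω ↦ by simp [hξ]
  have hV (p : ℕ) (hp : p ≤ N) : ∫ ω, ‖ξ p ω‖ ^ 2 ∂P ≤ V := by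
    refine (h.integral_sq_norm_le hc hK hp).trans ?_
    rw [hξ0]
    exact mul_le_mul_of_nonneg_right (add_le_add_left
      (integral_sq_norm_le_of_lintegral_le hξ₀meas hC₀.le hξ₀) _) (Real.exp_pos _).le
  have hint : Integrable (fun ω ↦ ‖ξ n ω - ξ m ω‖ ^ 2) P :=
    ((h.memLp hnN).sub (h.memLp (hmn.trans hnN))).norm.integrable_sq
  rw [← ofReal_integral_eq_lintegral_ofReal hint (ae_of_all _ fun _ ↦ sq_nonneg _)]
  exact ENNReal.ofReal_le_ofReal ((h.integral_sq_norm_sub_le hc hK hV hmn hnN).trans_eq (by ring))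

/-- discrete-time core of Lemma 2 of the paper.
Under the conditional drift bound `‖E[α_k | F_{k-1}]‖ ≤ δL(1 + ‖ξ_{k-1}‖)` and conditional
second-moment bound `E[‖α_k‖² | F_{k-1}] ≤ δL(1 + ‖ξ_{k-1}‖²)` for the partial sums
`ξ_n = ξ₀ + Σ_{k=1}^n α_k`, with `Nδ ≤ T` and `E‖ξ₀‖² ≤ C₀`, there is a constant `k`
depending only on `L`, `T`, `C₀` such that `E‖ξ_n − ξ_m‖² ≤ k·δ·(n − m)` for all
`0 ≤ m ≤ n ≤ N`. -/
theorem increment_second_moment_bound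
    (d : ℕ) (hd : 1 ≤ d) (L T C₀ : ℝ) (hL : 0 < L) (hT : 0 < T) (hC₀ : 0 < C₀) :
    ∃ k : ℝ, 0 < k ∧
      ∀ (Ω : Type) [m0 : MeasurableSpace Ω] (P : Measure Ω), IsProbabilityMeasure P →
      ∀ (F : Filtration ℕ m0) (δ : ℝ) (N : ℕ)
        (ξ₀ : Ω → EuclideanSpace ℝ (Fin d))
        (α : ℕ → Ω → EuclideanSpace ℝ (Fin d))
        (ξ : ℕ → Ω → EuclideanSpace ℝ (Fin d)),
        0 < δ → δ ≤ 1 → (N : ℝ) * δ ≤ T →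
        StronglyMeasurable[F 0] ξ₀ →
        (∫⁻ ω, ENNReal.ofReal (‖ξ₀ ω‖ ^ 2) ∂P) ≤ ENNReal.ofReal C₀ →
        (∀ j, 1 ≤ j → j ≤ N → StronglyMeasurable[F j] (α j)) →
        (∀ j, 1 ≤ j → j ≤ N → MemLp (α j) 2 P) →
        (∀ n ω, ξ n ω = ξ₀ ω + ∑ j ∈ Finset.Icc 1 n, α j ω) →
        (∀ᵐ ω ∂P, ∀ j, 1 ≤ j → j ≤ N →
          ‖(P[α j | F (j - 1)]) ω‖ ≤ δ * L * (1 + ‖ξ (j - 1) ω‖)) →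
        (∀ᵐ ω ∂P, ∀ j, 1 ≤ j → j ≤ N →
          (P[fun ω' => ‖α j ω'‖ ^ 2 | F (j - 1)]) ω ≤ δ * L * (1 + ‖ξ (j - 1) ω‖ ^ 2)) →
        ∀ m n : ℕ, m ≤ n → n ≤ N →
          (∫⁻ ω, ENNReal.ofReal (‖ξ n ω - ξ m ω‖ ^ 2) ∂P)
            ≤ ENNReal.ofReal (k * δ * ((n : ℝ) - (m : ℝ))) :=
  increment_second_moment_bound_general d L T C₀ hL hT hC₀
end

section
/- Let d ≥ 1. For each ε ∈ (0, 1] let G^ε be a finite nonnegative Borel measure on ℝ^d, and let G be a finite nonnegative Borel measure on ℝ^d with ∫ (‖v‖ + ‖v‖²) G(dv) < ∞; set a₀ := ∫ v G(dv) ∈ ℝ^d and c₀ := ∫ v vᵀ G(dv) (a d×d matrix). Let a₁, a ∈ ℝ^d and let c be a d×d real matrix. Assume: (i) ∫ v G^ε(dv) = ε a₁ + ε² a + ε² θ_a(ε) with θ_a(ε) → 0 as ε → 0; (ii) ∫ v vᵀ G^ε(dv) = ε² c + ε² θ_c(ε) with θ_c(ε) → 0 as ε → 0; (iii) for every bounded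 Borel function g : ℝ^d → ℝ with g(v)/‖v‖² → 0 as v → 0, one has ε^{-2} ∫ g dG^ε → ∫ g dG as ε → 0; (iv) uniform square-integrability: lim_{c → ∞} sup_{ε ∈ (0,1]} ε^{-2} ∫_{‖v‖ > c} ‖v‖² G^ε(dv) = 0. Then for every bounded, twice continuously differentiable function φ : ℝ^d → ℝ with bounded first and second derivatives, and every u ∈ ℝ^d: lim_{ε → 0} [ ε^{-2} ∫ (φ(u + v) − φ(u)) G^ε(dv) − ε^{-1} ⟨a₁, ∇φ(u)⟩ ] = ⟨a − a₀, ∇φ(u)⟩ + ½ tr((c − c₀) ∇²φ(u)) + ∫ (φ(u + v) − φ(u)) G(dv). -/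
/-!
Write `φ (u + v) - φ u = φ' u v + ½ φ'' u v v + R v`. Integrating against `G^ε` turns the first
two terms into the first and second moments of `G^ε`, which (i) and (ii) expand in powers of `ε`;
the resulting `ε⁻¹ ⟨a₁, ∇φ(u)⟩` cancels. The remainder satisfies `|R v| ≤ K ‖v‖²` and
`R v = o(‖v‖²)`, so after truncating it outside a large ball it is an admissible test function
for (iii), while (iv) makes the truncation error uniformly small. Finally
`∫ (φ (u + v) - φ u) dG` splits in the same way, which produces the corrections `a₀` and `c₀`.
-/

open MeasureTheory Filter Topology RealInnerProductSpace
open scoped ENNReal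

section Taylor

variable {E : Type*} [NormedAddCommGroup E] [NormedSpace ℝ E] {φ : E → ℝ}

noncomputable def secondOrderRemainder (φ : E → ℝ) (u v : E) : ℝ :=
  φ (u + v) - φ u - fderiv ℝ φ u v - 1 / 2 * fderiv ℝ (fderiv ℝ φ) u v v

theorem continuous_secondOrderRemainder (hφ : Continuous φ) (u : E) :
    Continuous (secondOrderRemainder φ u) := by
  unfold secondOrderRemainder
  fun_prop

theorem norm_fderiv_fderiv_eq (φ : E → ℝ) (x : E) :
    ‖fderiv ℝ (fderiv ℝ φ) x‖ = ‖iteratedFDeriv ℝ 2 φ x‖ := by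
  rw [← norm_iteratedFDeriv_fderiv (n := 1), ← norm_iteratedFDeriv_fderiv (n := 0),
    norm_iteratedFDeriv_zero]

/-- The remainder is the increment of `ψ x = φ x - φ' u x - ½ φ'' u (x - u) (x - u)`, whose
derivative at `x` is `φ' x - φ' u - φ'' u (x - u)` by symmetry of `φ'' u`. -/
theorem abs_secondOrderRemainder_le (hφ : ContDiff ℝ 2 φ) (u v : E) {δ : ℝ}
    (hδ : ∀ x ∈ Metric.closedBall u ‖v‖,
      ‖fderiv ℝ φ x - fderiv ℝ φ u - fderiv ℝ (fderiv ℝ φ) u (x - u)‖ ≤ δ) :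
    |secondOrderRemainder φ u v| ≤ δ * ‖v‖ := by
  set D := fderiv ℝ (fderiv ℝ φ) u
  have hsymm : IsSymmSndFDerivAt ℝ φ u := hφ.contDiffAt.isSymmSndFDerivAt (by simp)
  set ψ : E → ℝ := fun x => φ x - fderiv ℝ φ u x - 1 / 2 * D (x - u) (x - u)
  have hψ : ∀ x, HasFDerivAt ψ (fderiv ℝ φ x - fderiv ℝ φ u - D (x - u)) x := by
    intro x
    have hquad := D.hasFDerivAt_of_bilinear ((hasFDerivAt_id x).sub_const u)
      ((hasFDerivAt_id x).sub_const u)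
    refine (((hφ.differentiable two_ne_zero x).hasFDerivAt.sub
      (fderiv ℝ φ u).hasFDerivAt).sub (hquad.const_mul (1 / 2 : ℝ))).congr_fderiv ?_
    ext w
    simp only [sub_apply, add_apply, smul_apply, ContinuousLinearMap.precompR_apply,
      ContinuousLinearMap.precompL_apply, ContinuousLinearMap.coe_id', id_eq, smul_eq_mul,
      ContinuousLinearMap.compL_apply, ContinuousLinearMap.coe_comp, Function.comp_apply]
    rw [hsymm w (x - u)]
    ring
  have hincr : ψ (u + v) - ψ u = secondOrderRemainder φ u v := by
    simp only [ψ, secondOrderRemainder, map_add, add_sub_cancel_left, sub_self, map_zero,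
      mul_zero, sub_zero]
    ring
  have := (convex_closedBall u ‖v‖).norm_image_sub_le_of_norm_hasFDerivWithin_le (x := u)
    (y := u + v) (fun x _ => (hψ x).hasFDerivWithinAt) hδ
    (Metric.mem_closedBall_self (norm_nonneg v)) (by simp [dist_eq_norm])
  rwa [hincr, Real.norm_eq_abs, add_sub_cancel_left] at this

theorem abs_secondOrderRemainder_le_of_norm_iteratedFDeriv_le (hφ : ContDiff ℝ 2 φ) {M : ℝ}
    (hM : ∀ x, ‖iteratedFDeriv ℝ 2 φ x‖ ≤ M) (u v : E) :
    |secondOrderRemainder φ u v| ≤ 2 * M * ‖v‖ ^ 2 := by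
  have hD : ∀ x, ‖fderiv ℝ (fderiv ℝ φ) x‖ ≤ M := fun x =>
    (norm_fderiv_fderiv_eq φ x).trans_le (hM x)
  have hlip : ∀ x, ‖fderiv ℝ φ x - fderiv ℝ φ u‖ ≤ M * ‖x - u‖ := fun x =>
    convex_univ.norm_image_sub_le_of_norm_hasFDerivWithin_le (fun z _ =>
      ((hφ.fderiv_right le_rfl).differentiable one_ne_zero z).hasFDerivAt.hasFDerivWithinAt)
      (fun z _ => hD z) (Set.mem_univ u) (Set.mem_univ x)
  have hM₀ : 0 ≤ M := (norm_nonneg (fderiv ℝ (fderiv ℝ φ) u)).trans (hD u)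
  calc |secondOrderRemainder φ u v| ≤ 2 * M * ‖v‖ * ‖v‖ := by
        refine abs_secondOrderRemainder_le hφ u v fun x hx => ?_
        rw [Metric.mem_closedBall, dist_eq_norm] at hx
        calc _ ≤ ‖fderiv ℝ φ x - fderiv ℝ φ u‖ + ‖fderiv ℝ (fderiv ℝ φ) u (x - u)‖ :=
              norm_sub_le _ _
          _ ≤ M * ‖x - u‖ + M * ‖x - u‖ := add_le_add (hlip x)
              ((ContinuousLinearMap.le_opNorm _ _).trans (by gcongr; exact hD u))
          _ ≤ 2 * M * ‖v‖ := by nlinarith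
    _ = 2 * M * ‖v‖ ^ 2 := by ring

theorem secondOrderRemainder_isLittleO (hφ : ContDiff ℝ 2 φ) (u : E) :
    secondOrderRemainder φ u =o[𝓝 0] fun v => ‖v‖ ^ 2 := by
  have hφ' := ((hφ.fderiv_right le_rfl).differentiable one_ne_zero u).hasFDerivAt.isLittleO
  refine Asymptotics.isLittleO_iff.2 fun η hη => ?_
  obtain ⟨ρ, hρ, hball⟩ :=
    Metric.eventually_nhds_iff_ball.1 (Asymptotics.isLittleO_iff.1 hφ' hη)
  filter_upwards [Metric.ball_mem_nhds 0 hρ] with v hv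
  rw [mem_ball_zero_iff] at hv
  have hbound := abs_secondOrderRemainder_le hφ u v (δ := η * ‖v‖) fun x hx => by
    have hxu : ‖x - u‖ ≤ ‖v‖ := by rwa [Metric.mem_closedBall, dist_eq_norm] at hx
    exact (hball x (Metric.closedBall_subset_ball hv hx)).trans (by gcongr)
  simpa [sq, mul_assoc] using hbound

end Taylor

theorem tendsto_of_forall_approx {α X : Type*} [PseudoMetricSpace X] {l : Filter α}
    {f : α → X} {y : X}
    (h : ∀ δ > 0, ∃ (g : α → X) (z : X), Tendsto g l (𝓝 z) ∧
      (∀ᶠ x in l, dist (f x) (g x) ≤ δ) ∧ dist z y ≤ δ) :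
    Tendsto f l (𝓝 y) := by
  refine Metric.tendsto_nhds.2 fun η hη => ?_
  obtain ⟨g, z, hg, hfg, hzy⟩ := h (η / 3) (by positivity)
  filter_upwards [Metric.tendsto_nhds.1 hg (η / 3) (by positivity), hfg] with x hgx hfgx
  calc dist (f x) y ≤ dist (f x) (g x) + dist (g x) z + dist z y := dist_triangle4 _ _ _ _
    _ < η := by linarith

theorem integral_sub_integral_indicator_compl {X F : Type*} [MeasurableSpace X]
    [NormedAddCommGroup F] [NormedSpace ℝ F] {μ : Measure X} {h : X → F} (hh : Integrable h μ)
    {s : Set X} (hs : MeasurableSet s) :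
    ∫ v, h v ∂μ - ∫ v, sᶜ.indicator h v ∂μ = ∫ v in s, h v ∂μ := by
  rw [integral_indicator hs.compl, ← integral_add_compl hs hh, add_sub_cancel_right]

section ScaledTailMoment

variable {E : Type*} [NormedAddCommGroup E] [MeasurableSpace E]

/-- `sup_{0<ε≤1} ε⁻² ∫_{‖v‖>C} ‖v‖² dG^ε`; hypothesis (iv) says it tends to `0` as `C → ∞`. -/
noncomputable def scaledTailMoment (Gε : ℝ → Measure E) (C : ℝ) : ℝ≥0∞ :=
  ⨆ ε : {ε : ℝ // 0 < ε ∧ ε ≤ 1}, ENNReal.ofReal ((ε : ℝ)⁻¹ ^ 2) *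
    ∫⁻ v in {v : E | C < ‖v‖}, ENNReal.ofReal (‖v‖ ^ 2) ∂(Gε ε)

variable {Gε : ℝ → Measure E} {C ε : ℝ}

theorem lintegral_tail_le_scaledTailMoment (hε : 0 < ε) (hε1 : ε ≤ 1) :
    ENNReal.ofReal (ε⁻¹ ^ 2) * ∫⁻ v in {v : E | C < ‖v‖}, ENNReal.ofReal (‖v‖ ^ 2) ∂(Gε ε)
      ≤ scaledTailMoment Gε C :=
  le_iSup_of_le (⟨ε, hε, hε1⟩ : {ε : ℝ // 0 < ε ∧ ε ≤ 1}) le_rfl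

theorem integral_tail_le_of_scaledTailMoment_le {η : ℝ} (hη : 0 ≤ η) (hε : 0 < ε)
    (hε1 : ε ≤ 1) (hsq : Integrable (fun v : E => ‖v‖ ^ 2) (Gε ε))
    (hC : scaledTailMoment Gε C ≤ ENNReal.ofReal η) :
    ε⁻¹ ^ 2 * ∫ v in {v : E | C < ‖v‖}, ‖v‖ ^ 2 ∂(Gε ε) ≤ η := by
  rw [← ENNReal.ofReal_le_ofReal_iff hη, ENNReal.ofReal_mul (by positivity),
    ofReal_integral_eq_lintegral_ofReal hsq.integrableOn (ae_of_all _ fun v => by positivity)]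
  exact (lintegral_tail_le_scaledTailMoment hε hε1).trans hC

variable [OpensMeasurableSpace E]

theorem measurableSet_lt_norm (C : ℝ) : MeasurableSet {v : E | C < ‖v‖} :=
  measurableSet_lt measurable_const measurable_norm

theorem tendsto_setIntegral_lt_norm {F : Type*} [NormedAddCommGroup F] [NormedSpace ℝ F]
    {μ : Measure E} {h : E → F} (hh : Integrable h μ) :
    Tendsto (fun C : ℝ => ∫ v in {v : E | C < ‖v‖}, h v ∂μ) atTop (𝓝 0) := by
  have hempty : ⋂ C : ℝ, {v : E | C < ‖v‖} = ∅ :=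
    Set.eq_empty_of_forall_notMem fun v hv => lt_irrefl ‖v‖ (Set.mem_iInter.1 hv ‖v‖)
  simpa [hempty] using tendsto_setIntegral_of_antitone measurableSet_lt_norm
    (fun C C' hCC' v hv => hCC'.trans_lt hv) ⟨0, hh.integrableOn⟩

theorem integrable_of_integrable_norm_sq [SecondCountableTopology E] {μ : Measure E}
    [IsFiniteMeasure μ] (hsq : Integrable (fun v : E => ‖v‖ ^ 2) μ) :
    Integrable (fun v : E => v) μ :=
  ((memLp_two_iff_integrable_sq_norm aestronglyMeasurable_id).2 hsq).integrable one_le_two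

/-- Outside a large ball the integral is controlled by `scaledTailMoment`; inside it the
integrand is bounded and the measure is finite. -/
theorem integrable_norm_sq_of_tendsto_scaledTailMoment
    (hUI : Tendsto (scaledTailMoment Gε) atTop (𝓝 0)) (hε : 0 < ε) (hε1 : ε ≤ 1)
    [IsFiniteMeasure (Gε ε)] :
    Integrable (fun v : E => ‖v‖ ^ 2) (Gε ε) := by
  obtain ⟨C, hC⟩ := (hUI.eventually (gt_mem_nhds ENNReal.zero_lt_top)).exists
  have hmeas : AEStronglyMeasurable (fun v : E => ‖v‖ ^ 2) (Gε ε) :=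
    (continuous_norm.pow 2).aestronglyMeasurable
  have htail : IntegrableOn (fun v : E => ‖v‖ ^ 2) {v : E | C < ‖v‖} (Gε ε) := by
    refine ⟨hmeas.restrict, (hasFiniteIntegral_iff_ofReal
      (ae_of_all _ fun v => by positivity)).2 ?_⟩
    exact ENNReal.lt_top_of_mul_ne_top_right
      ((lintegral_tail_le_scaledTailMoment hε hε1).trans_lt hC).ne (by simpa using hε.ne')
  have hball : IntegrableOn (fun v : E => ‖v‖ ^ 2) {v : E | C < ‖v‖}ᶜ (Gε ε) :=
    Measure.integrableOn_of_bounded (M := C ^ 2) (measure_ne_top _ _) hmeas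
      (ae_restrict_of_forall_mem (measurableSet_lt_norm C).compl fun v hv => by
        have hv : ‖v‖ ≤ C := not_lt.1 hv
        rw [Real.norm_eq_abs, abs_of_nonneg (by positivity)]
        gcongr)
  simpa using htail.union hball

/-- Truncating `h` outside a large ball yields a test function for the Poisson approximation;
the uniform square-integrability makes the error uniformly small in `ε`. -/
theorem tendsto_scaled_integral_of_abs_le_norm_sq {G : Measure E}
    (hsq : ∀ ε, 0 < ε → ε ≤ 1 → Integrable (fun v : E => ‖v‖ ^ 2) (Gε ε))
    (hpoisson : ∀ g : E → ℝ, Measurable g → (∃ M : ℝ, ∀ v, |g v| ≤ M) →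
      Tendsto (fun v => g v / ‖v‖ ^ 2) (𝓝[≠] (0 : E)) (𝓝 0) →
      Tendsto (fun ε : ℝ => ε⁻¹ ^ 2 * ∫ v, g v ∂(Gε ε)) (𝓝[>] (0 : ℝ))
        (𝓝 (∫ v, g v ∂G)))
    (hUI : Tendsto (scaledTailMoment Gε) atTop (𝓝 0))
    {h : E → ℝ} (hmeas : Measurable h) {K : ℝ} (hK : ∀ v, |h v| ≤ K * ‖v‖ ^ 2)
    (hlim : Tendsto (fun v => h v / ‖v‖ ^ 2) (𝓝[≠] (0 : E)) (𝓝 0)) (hG : Integrable h G) :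
    Tendsto (fun ε : ℝ => ε⁻¹ ^ 2 * ∫ v, h v ∂(Gε ε)) (𝓝[>] (0 : ℝ)) (𝓝 (∫ v, h v ∂G)) := by
  replace hK : ∀ v, |h v| ≤ |K| * ‖v‖ ^ 2 := fun v =>
    (hK v).trans (by gcongr; exact le_abs_self K)
  refine tendsto_of_forall_approx fun δ hδ => ?_
  obtain ⟨C, hC₀, hCε, hCG⟩ := ((eventually_gt_atTop 0).and
    ((ENNReal.tendsto_nhds_zero.1 hUI _ (ENNReal.ofReal_pos.2 (div_pos hδ (by positivity :
      (0 : ℝ) < |K| + 1)))).and ((tendsto_setIntegral_lt_norm hG).eventually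
      (Metric.closedBall_mem_nhds 0 hδ)))).exists
  set s := {v : E | C < ‖v‖}
  have hs : MeasurableSet s := measurableSet_lt_norm C
  have hbdd : ∃ M : ℝ, ∀ v, |sᶜ.indicator h v| ≤ M := by
    refine ⟨|K| * C ^ 2, fun v => ?_⟩
    by_cases hv : v ∈ sᶜ
    · rw [Set.indicator_of_mem hv]
      exact (hK v).trans (by gcongr; exact not_lt.1 hv)
    · rw [Set.indicator_of_notMem hv, abs_zero]
      positivity
  have hnear : ∀ᶠ v in 𝓝[≠] (0 : E), h v / ‖v‖ ^ 2 = sᶜ.indicator h v / ‖v‖ ^ 2 := by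
    filter_upwards [nhdsWithin_le_nhds (Metric.ball_mem_nhds 0 hC₀)] with v hv
    rw [Set.indicator_of_mem (not_lt.2 (mem_ball_zero_iff.1 hv).le)]
  refine ⟨_, _, hpoisson _ (hmeas.indicator hs.compl) hbdd (hlim.congr' hnear), ?_, ?_⟩
  · filter_upwards [Ioc_mem_nhdsGT one_pos] with ε ⟨hε, hε1⟩
    have hhε : Integrable h (Gε ε) :=
      ((hsq ε hε hε1).const_mul |K|).mono' hmeas.aestronglyMeasurable (ae_of_all _ hK)
    rw [Real.dist_eq, ← mul_sub, integral_sub_integral_indicator_compl hhε hs, abs_mul,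
      abs_of_pos (by positivity)]
    calc ε⁻¹ ^ 2 * |∫ v in s, h v ∂Gε ε|
        ≤ ε⁻¹ ^ 2 * ∫ v in s, |K| * ‖v‖ ^ 2 ∂Gε ε := by
          gcongr
          exact norm_integral_le_of_norm_le (f := h) ((hsq ε hε hε1).integrableOn.const_mul _)
            (ae_of_all _ hK)
      _ = |K| * (ε⁻¹ ^ 2 * ∫ v in s, ‖v‖ ^ 2 ∂Gε ε) := by rw [integral_const_mul]; ring
      _ ≤ |K| * (δ / (|K| + 1)) := by
          gcongr
          exact integral_tail_le_of_scaledTailMoment_le (by positivity) hε hε1 (hsq ε hε hε1) hCε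
      _ ≤ δ := by
          rw [mul_div_assoc', div_le_iff₀ (by positivity)]
          nlinarith [abs_nonneg K]
  · rw [dist_comm, Real.dist_eq, integral_sub_integral_indicator_compl hG hs]
    simpa using hCG

end ScaledTailMoment

section Moments

variable {E : Type*} [NormedAddCommGroup E] [NormedSpace ℝ E] [MeasurableSpace E]
  [OpensMeasurableSpace E]

theorem integrable_secondOrderRemainder {φ : E → ℝ} (hφ : ContDiff ℝ 2 φ) {M : ℝ}
    (hM : ∀ x, ‖iteratedFDeriv ℝ 2 φ x‖ ≤ M) (u : E) {μ : Measure E}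
    (hsq : Integrable (fun v : E => ‖v‖ ^ 2) μ) :
    Integrable (secondOrderRemainder φ u) μ :=
  (hsq.const_mul (2 * M)).mono'
    (continuous_secondOrderRemainder hφ.continuous u).aestronglyMeasurable
    (ae_of_all _ (abs_secondOrderRemainder_le_of_norm_iteratedFDeriv_le hφ hM u))

theorem integral_sub_eq_moments [CompleteSpace E] {μ : Measure E} {φ : E → ℝ} (u : E)
    (hv : Integrable (fun v : E => v) μ) (hsq : Integrable (fun v : E => ‖v‖ ^ 2) μ)
    (hR : Integrable (secondOrderRemainder φ u) μ) :
    ∫ v, (φ (u + v) - φ u) ∂μ = fderiv ℝ φ u (∫ v, v ∂μ)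
      + 1 / 2 * ∫ v, fderiv ℝ (fderiv ℝ φ) u v v ∂μ + ∫ v, secondOrderRemainder φ u v ∂μ := by
  set D := fderiv ℝ (fderiv ℝ φ) u
  have hD : Integrable (fun v => D v v) μ := by
    refine (hsq.const_mul ‖D‖).mono' (D.continuous₂.comp₂ continuous_id
      continuous_id).aestronglyMeasurable (ae_of_all _ fun v => ?_)
    calc ‖D v v‖ ≤ ‖D‖ * ‖v‖ * ‖v‖ := D.le_opNorm₂ v v
      _ = ‖D‖ * ‖v‖ ^ 2 := by ring
  have hF := (fderiv ℝ φ u).integrable_comp hv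
  have hsplit : (fun v => φ (u + v) - φ u)
      = fun v => fderiv ℝ φ u v + 1 / 2 * D v v + secondOrderRemainder φ u v := by
    ext v; simp only [secondOrderRemainder, D]; ring
  have hFD : Integrable (fun v => fderiv ℝ φ u v + 1 / 2 * D v v) μ := hF.add (hD.const_mul _)
  rw [hsplit, integral_add hFD hR, integral_add hF (hD.const_mul _),
    integral_const_mul, (fderiv ℝ φ u).integral_comp_comm hv]

end Moments

section Euclidean

variable {d : ℕ}

noncomputable def secondMoment (μ : Measure (EuclideanSpace ℝ (Fin d))) :
    Matrix (Fin d) (Fin d) ℝ :=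
  Matrix.of fun i j => ∫ v, v i * v j ∂μ

/-- The indices of `B` are transposed so that integrating gives `trace (secondMoment μ * H)`
with `H i j = B eᵢ eⱼ` without any symmetry of `B`. -/
theorem apply_self_eq_sum_single
    (B : EuclideanSpace ℝ (Fin d) →L[ℝ] EuclideanSpace ℝ (Fin d) →L[ℝ] ℝ)
    (v : EuclideanSpace ℝ (Fin d)) :
    B v v = ∑ i, ∑ j, v i * v j * B (EuclideanSpace.single j 1) (EuclideanSpace.single i 1) := by
  have hv : ∑ i, v i • EuclideanSpace.single i (1 : ℝ) = v := by
    simpa using (EuclideanSpace.basisFun (Fin d) ℝ).sum_repr v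
  conv_lhs => rw [← hv]
  simp only [map_sum, map_smul, sum_apply, smul_apply, smul_eq_mul, Finset.mul_sum, mul_assoc]

theorem integrable_coord_mul_coord {μ : Measure (EuclideanSpace ℝ (Fin d))}
    (hsq : Integrable (fun v : EuclideanSpace ℝ (Fin d) => ‖v‖ ^ 2) μ) (i j : Fin d) :
    Integrable (fun v : EuclideanSpace ℝ (Fin d) => v i * v j) μ :=
  hsq.mono' (by fun_prop) (ae_of_all _ fun v => by
    rw [norm_mul, sq]
    exact mul_le_mul (PiLp.norm_apply_le v i) (PiLp.norm_apply_le v j) (norm_nonneg _)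
      (norm_nonneg _))

theorem integral_apply_self_eq_trace
    (B : EuclideanSpace ℝ (Fin d) →L[ℝ] EuclideanSpace ℝ (Fin d) →L[ℝ] ℝ)
    {μ : Measure (EuclideanSpace ℝ (Fin d))}
    (hsq : Integrable (fun v : EuclideanSpace ℝ (Fin d) => ‖v‖ ^ 2) μ) :
    ∫ v, B v v ∂μ = (secondMoment μ * Matrix.of fun i j =>
      B (EuclideanSpace.single i 1) (EuclideanSpace.single j 1)).trace := by
  have hij := fun i j => (integrable_coord_mul_coord hsq i j).mul_const
    (B (EuclideanSpace.single j 1) (EuclideanSpace.single i 1))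
  simp_rw [apply_self_eq_sum_single B]
  rw [integral_finsetSum _ fun i _ => integrable_finsetSum _ fun j _ => hij i j]
  simp_rw [integral_finsetSum _ fun j _ => hij _ j, integral_mul_const]
  simp only [Matrix.trace, Matrix.diag, Matrix.mul_apply, secondMoment, Matrix.of_apply]

noncomputable def hessianMatrix (φ : EuclideanSpace ℝ (Fin d) → ℝ) (u : EuclideanSpace ℝ (Fin d)) :
    Matrix (Fin d) (Fin d) ℝ :=
  Matrix.of fun i j => iteratedFDeriv ℝ 2 φ u
    ![EuclideanSpace.single i (1 : ℝ), EuclideanSpace.single j (1 : ℝ)]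

variable {φ : EuclideanSpace ℝ (Fin d) → ℝ} {M : ℝ} {μ : Measure (EuclideanSpace ℝ (Fin d))}

theorem integral_sub_eq_moments_trace (hφ : ContDiff ℝ 2 φ)
    (hM : ∀ x, ‖iteratedFDeriv ℝ 2 φ x‖ ≤ M) (u : EuclideanSpace ℝ (Fin d))
    (hv : Integrable (fun v : EuclideanSpace ℝ (Fin d) => v) μ)
    (hsq : Integrable (fun v : EuclideanSpace ℝ (Fin d) => ‖v‖ ^ 2) μ) :
    ∫ v, (φ (u + v) - φ u) ∂μ = fderiv ℝ φ u (∫ v, v ∂μ)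
      + 1 / 2 * (secondMoment μ * hessianMatrix φ u).trace
      + ∫ v, secondOrderRemainder φ u v ∂μ := by
  have hH : hessianMatrix φ u = Matrix.of fun i j =>
      fderiv ℝ (fderiv ℝ φ) u (EuclideanSpace.single i 1) (EuclideanSpace.single j 1) := by
    ext i j
    simp [hessianMatrix, iteratedFDeriv_two_apply]
  rw [hH, ← integral_apply_self_eq_trace _ hsq]
  exact integral_sub_eq_moments u hv hsq (integrable_secondOrderRemainder hφ hM u hsq)

theorem scaled_integral_sub_eq_of_moments (hφ : ContDiff ℝ 2 φ)
    (hM : ∀ x, ‖iteratedFDeriv ℝ 2 φ x‖ ≤ M) (u : EuclideanSpace ℝ (Fin d))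
    (hv : Integrable (fun v : EuclideanSpace ℝ (Fin d) => v) μ)
    (hsq : Integrable (fun v : EuclideanSpace ℝ (Fin d) => ‖v‖ ^ 2) μ)
    {ε : ℝ} (hε : ε ≠ 0) {a₁ a θ : EuclideanSpace ℝ (Fin d)}
    {c Θ : Matrix (Fin d) (Fin d) ℝ} (hmean : ∫ v, v ∂μ = ε • a₁ + ε ^ 2 • a + ε ^ 2 • θ)
    (hsecond : secondMoment μ = ε ^ 2 • (c + Θ)) :
    ε⁻¹ ^ 2 * ∫ v, (φ (u + v) - φ u) ∂μ - ε⁻¹ * fderiv ℝ φ u a₁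
      = fderiv ℝ φ u a + fderiv ℝ φ u θ + 1 / 2 * ((c + Θ) * hessianMatrix φ u).trace
        + ε⁻¹ ^ 2 * ∫ v, secondOrderRemainder φ u v ∂μ := by
  rw [integral_sub_eq_moments_trace hφ hM u hv hsq, hmean, hsecond, Matrix.smul_mul,
    Matrix.trace_smul]
  simp only [map_add, map_smul, smul_eq_mul]
  field_simp
  ring

end Euclidean

theorem compensating_operator_asymptotic_representation_general
    (d : ℕ)
    (Gε : ℝ → Measure (EuclideanSpace ℝ (Fin d)))
    (hGεfin : ∀ ε : ℝ, 0 < ε → ε ≤ 1 → IsFiniteMeasure (Gε ε))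
    (G : Measure (EuclideanSpace ℝ (Fin d)))
    (hGmom : Integrable (fun v : EuclideanSpace ℝ (Fin d) => ‖v‖ + ‖v‖ ^ 2) G)
    (a₀ : EuclideanSpace ℝ (Fin d)) (ha₀ : a₀ = ∫ v, v ∂G)
    (c₀ : Matrix (Fin d) (Fin d) ℝ) (hc₀ : ∀ i j, c₀ i j = ∫ v, v i * v j ∂G)
    (a₁ a : EuclideanSpace ℝ (Fin d)) (c : Matrix (Fin d) (Fin d) ℝ)
    -- (i) approximation of the mean values
    (θa : ℝ → EuclideanSpace ℝ (Fin d)) (hθa : Tendsto θa (𝓝[>] (0 : ℝ)) (𝓝 0))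
    (hmean : ∀ ε : ℝ, 0 < ε → ε ≤ 1 →
      ∫ v, v ∂(Gε ε) = ε • a₁ + ε ^ 2 • a + ε ^ 2 • θa ε)
    -- (ii) approximation of the second moments
    (θc : ℝ → Matrix (Fin d) (Fin d) ℝ)
    (hθc : ∀ i j, Tendsto (fun ε => θc ε i j) (𝓝[>] (0 : ℝ)) (𝓝 0))
    (hsecond : ∀ ε : ℝ, 0 < ε → ε ≤ 1 → ∀ i j,
      ∫ v, v i * v j ∂(Gε ε) = ε ^ 2 * (c i j + θc ε i j))
    -- (iii) Poisson approximation of the intensity kernel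
    (hpoisson : ∀ g : EuclideanSpace ℝ (Fin d) → ℝ, Measurable g →
      (∃ M : ℝ, ∀ v, |g v| ≤ M) →
      Tendsto (fun v => g v / ‖v‖ ^ 2) (𝓝[≠] (0 : EuclideanSpace ℝ (Fin d))) (𝓝 0) →
      Tendsto (fun ε : ℝ => ε⁻¹ ^ 2 * ∫ v, g v ∂(Gε ε)) (𝓝[>] (0 : ℝ))
        (𝓝 (∫ v, g v ∂G)))
    -- (iv) uniform square-integrability
    (hUI : Tendsto (fun C : ℝ => ⨆ ε : {ε : ℝ // 0 < ε ∧ ε ≤ 1},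
        ENNReal.ofReal ((ε : ℝ)⁻¹ ^ 2) *
          ∫⁻ v in {v : EuclideanSpace ℝ (Fin d) | C < ‖v‖},
            ENNReal.ofReal (‖v‖ ^ 2) ∂(Gε ε))
      atTop (𝓝 0))
    -- the test function
    (φ : EuclideanSpace ℝ (Fin d) → ℝ) (hφ : ContDiff ℝ 2 φ)
    (hφb : ∃ M : ℝ, ∀ x, |φ x| ≤ M ∧ ‖fderiv ℝ φ x‖ ≤ M ∧ ‖iteratedFDeriv ℝ 2 φ x‖ ≤ M)
    (u : EuclideanSpace ℝ (Fin d)) :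
    Tendsto (fun ε : ℝ =>
        ε⁻¹ ^ 2 * ∫ v, (φ (u + v) - φ u) ∂(Gε ε) - ε⁻¹ * ⟪a₁, gradient φ u⟫)
      (𝓝[>] (0 : ℝ))
      (𝓝 (⟪a - a₀, gradient φ u⟫
        + (1 / 2) * Matrix.trace ((c - c₀) *
            Matrix.of (fun i j => iteratedFDeriv ℝ 2 φ u
              ![EuclideanSpace.single i (1 : ℝ), EuclideanSpace.single j (1 : ℝ)]))
        + ∫ v, (φ (u + v) - φ u) ∂G)) := by
  obtain ⟨M, hM⟩ := hφb
  have hM2 : ∀ x, ‖iteratedFDeriv ℝ 2 φ x‖ ≤ M := fun x => (hM x).2.2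
  set F := fderiv ℝ φ u
  have hsqG : Integrable (fun v : EuclideanSpace ℝ (Fin d) => ‖v‖ ^ 2) G :=
    hGmom.mono' (by fun_prop) (ae_of_all _ fun v => by simp)
  have hvG : Integrable (fun v : EuclideanSpace ℝ (Fin d) => v) G :=
    (integrable_norm_iff (by fun_prop)).1
      (hGmom.mono' (by fun_prop) (ae_of_all _ fun v => by simp))
  have hsqε : ∀ ε, 0 < ε → ε ≤ 1 →
      Integrable (fun v : EuclideanSpace ℝ (Fin d) => ‖v‖ ^ 2) (Gε ε) := fun ε hε hε1 =>
    have := hGεfin ε hε hε1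
    integrable_norm_sq_of_tendsto_scaledTailMoment hUI hε hε1
  have hR := tendsto_scaled_integral_of_abs_le_norm_sq hsqε hpoisson hUI
    (continuous_secondOrderRemainder hφ.continuous u).measurable
    (abs_secondOrderRemainder_le_of_norm_iteratedFDeriv_le hφ hM2 u)
    ((secondOrderRemainder_isLittleO hφ u).tendsto_div_nhds_zero.mono_left nhdsWithin_le_nhds)
    (integrable_secondOrderRemainder hφ hM2 u hsqG)
  have hθ : Tendsto (fun ε => F a + F (θa ε) + 1 / 2 * ((c + θc ε) * hessianMatrix φ u).trace)
      (𝓝[>] 0) (𝓝 (F a + F 0 + 1 / 2 * ((c + 0) * hessianMatrix φ u).trace)) :=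
    (tendsto_const_nhds.add ((F.continuous.tendsto 0).comp hθa)).add
      (((by fun_prop : Continuous fun X => 1 / 2 * ((c + X) * hessianMatrix φ u).trace).tendsto
        0).comp (tendsto_pi_nhds.2 fun i => tendsto_pi_nhds.2 (hθc i)))
  convert (hθ.add hR).congr' ?_ using 2
  · rw [integral_sub_eq_moments_trace hφ hM2 u hvG hsqG, ← ha₀,
      show secondMoment G = c₀ from Matrix.ext fun i j => (hc₀ i j).symm, inner_gradient_right]
    simp only [F, hessianMatrix, conj_trivial, map_sub, map_zero, add_zero, Matrix.sub_mul,
      Matrix.trace_sub]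
    ring
  · filter_upwards [Ioc_mem_nhdsGT one_pos] with ε ⟨hε, hε1⟩
    have := hGεfin ε hε hε1
    rw [inner_gradient_right, conj_trivial]
    exact (scaled_integral_sub_eq_of_moments hφ hM2 u
      (integrable_of_integrable_norm_sq (hsqε ε hε hε1)) (hsqε ε hε hε1) hε.ne'
      (hmean ε hε hε1) (Matrix.ext fun i j => hsecond ε hε hε1 i j)).symm

/-- the analytic core of Lemma 3 of the paper: asymptotic representation of
the compensating operator at a fixed state.  Under the Lévy approximation conditions on the
jump measures `G^ε` — approximation of the mean values (L2), Poisson approximation of the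
intensity kernel (L3) and uniform square-integrability (C3) — the generator-type expression
`ε⁻²∫(φ(u+v) − φ(u)) G^ε(dv) − ε⁻¹⟨a₁, ∇φ(u)⟩` converges, as `ε → 0`, to
`⟨a − a₀, ∇φ(u)⟩ + ½ tr((c − c₀)∇²φ(u)) + ∫(φ(u+v) − φ(u)) G(dv)`
for every bounded `C²` function `φ` with bounded derivatives. -/
theorem compensating_operator_asymptotic_representation
    (d : ℕ) (hd : 1 ≤ d)
    (Gε : ℝ → Measure (EuclideanSpace ℝ (Fin d)))
    (hGεfin : ∀ ε : ℝ, 0 < ε → ε ≤ 1 → IsFiniteMeasure (Gε ε))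
    (G : Measure (EuclideanSpace ℝ (Fin d))) [IsFiniteMeasure G]
    (hGmom : Integrable (fun v : EuclideanSpace ℝ (Fin d) => ‖v‖ + ‖v‖ ^ 2) G)
    (a₀ : EuclideanSpace ℝ (Fin d)) (ha₀ : a₀ = ∫ v, v ∂G)
    (c₀ : Matrix (Fin d) (Fin d) ℝ) (hc₀ : ∀ i j, c₀ i j = ∫ v, v i * v j ∂G)
    (a₁ a : EuclideanSpace ℝ (Fin d)) (c : Matrix (Fin d) (Fin d) ℝ)
    -- (i) approximation of the mean values
    (θa : ℝ → EuclideanSpace ℝ (Fin d)) (hθa : Tendsto θa (𝓝[>] (0 : ℝ)) (𝓝 0))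
    (hmean : ∀ ε : ℝ, 0 < ε → ε ≤ 1 →
      ∫ v, v ∂(Gε ε) = ε • a₁ + ε ^ 2 • a + ε ^ 2 • θa ε)
    -- (ii) approximation of the second moments
    (θc : ℝ → Matrix (Fin d) (Fin d) ℝ)
    (hθc : ∀ i j, Tendsto (fun ε => θc ε i j) (𝓝[>] (0 : ℝ)) (𝓝 0))
    (hsecond : ∀ ε : ℝ, 0 < ε → ε ≤ 1 → ∀ i j,
      ∫ v, v i * v j ∂(Gε ε) = ε ^ 2 * (c i j + θc ε i j))
    -- (iii) Poisson approximation of the intensity kernel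
    (hpoisson : ∀ g : EuclideanSpace ℝ (Fin d) → ℝ, Measurable g →
      (∃ M : ℝ, ∀ v, |g v| ≤ M) →
      Tendsto (fun v => g v / ‖v‖ ^ 2) (𝓝[≠] (0 : EuclideanSpace ℝ (Fin d))) (𝓝 0) →
      Tendsto (fun ε : ℝ => ε⁻¹ ^ 2 * ∫ v, g v ∂(Gε ε)) (𝓝[>] (0 : ℝ))
        (𝓝 (∫ v, g v ∂G)))
    -- (iv) uniform square-integrability
    (hUI : Tendsto (fun C : ℝ => ⨆ ε : {ε : ℝ // 0 < ε ∧ ε ≤ 1},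
        ENNReal.ofReal ((ε : ℝ)⁻¹ ^ 2) *
          ∫⁻ v in {v : EuclideanSpace ℝ (Fin d) | C < ‖v‖},
            ENNReal.ofReal (‖v‖ ^ 2) ∂(Gε ε))
      atTop (𝓝 0))
    -- the test function
    (φ : EuclideanSpace ℝ (Fin d) → ℝ) (hφ : ContDiff ℝ 2 φ)
    (hφb : ∃ M : ℝ, ∀ x, |φ x| ≤ M ∧ ‖fderiv ℝ φ x‖ ≤ M ∧ ‖iteratedFDeriv ℝ 2 φ x‖ ≤ M)
    (u : EuclideanSpace ℝ (Fin d)) :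
    Tendsto (fun ε : ℝ =>
        ε⁻¹ ^ 2 * ∫ v, (φ (u + v) - φ u) ∂(Gε ε) - ε⁻¹ * ⟪a₁, gradient φ u⟫)
      (𝓝[>] (0 : ℝ))
      (𝓝 (⟪a - a₀, gradient φ u⟫
        + (1 / 2) * Matrix.trace ((c - c₀) *
            Matrix.of (fun i j => iteratedFDeriv ℝ 2 φ u
              ![EuclideanSpace.single i (1 : ℝ), EuclideanSpace.single j (1 : ℝ)]))
        + ∫ v, (φ (u + v) - φ u) ∂G)) :=
  compensating_operator_asymptotic_representation_general d Gε hGεfin G hGmom a₀ ha₀ c₀ hc₀ a₁ a c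
    θa hθa hmean θc hθc hsecond hpoisson hUI φ hφ hφb u
end
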